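/- arXiv:2303.11646 — 2 statements merged into one kernel-verified Lean document; each statement's English description precedes it below -/
import Mathlib

section
/- Suppose the FIFO stability condition fails strictly, i.e., Σ_{ℓ,k∈{1,2}} λ_ℓ λ_k θ_{ℓk}/(λ₁+λ₂) + R̄(λ₁+λ₂) > 1, where R̄ = E[R]. Then there exist real constants β₁, β₂ (one may take β_y = a_y, the balancing constants) and a real α > 0 such that for both y ∈ {1,2}: −α + Σ_{k=1}^{2} λ_k (1 − e^{−α θ_{yk}} · E[e^{−αR}] · e^{−α(β_k − β_y)}) > 0. -/
/-!
Each test function `f_y(α) = -α + Σ_k λ_k (1 - e^{-αθ_{yk}} E[e^{-αR}] e^{-α(β_k - β_y)})`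
vanishes at `α = 0`, and since the moment generating function of the bounded `R` has derivative
`R̄` at `0`, its derivative there is `-1 + Σ_k λ_k (θ_{yk} + β_k - β_y) + R̄ (λ₁ + λ₂)`.
The balancing constants make `Σ_k λ_k (θ_{yk} + β_k - β_y)` independent of `y`, equal to
`Σ_{ℓ,k} λ_ℓ λ_k θ_{ℓk} / (λ₁ + λ₂)`, so the instability condition says that both derivatives
are positive, and then both test functions are positive for all small `α > 0`.
-/

open MeasureTheory ProbabilityTheory Real Filter Topology Set

lemma eventually_pos_of_hasDerivAt {f : ℝ → ℝ} {f' x₀ : ℝ} (hf : HasDerivAt f f' x₀)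
    (hf₀ : f x₀ = 0) (hf' : 0 < f') : ∀ᶠ x in 𝓝[>] x₀, 0 < f x := by
  filter_upwards [(hf.tendsto_slope.mono_left (nhdsGT_le_nhdsNE x₀)).eventually
    (eventually_gt_nhds hf'), self_mem_nhdsWithin] with x hslope hx
  exact pos_of_slope_pos hx hslope hf₀

lemma hasDerivAt_mgf_zero_of_mem_Icc {Ω : Type*} [MeasurableSpace Ω] {μ : Measure Ω}
    [IsFiniteMeasure μ] {X : Ω → ℝ} {a b : ℝ} (hX : AEMeasurable X μ)
    (hab : ∀ᵐ ω ∂μ, X ω ∈ Icc a b) : HasDerivAt (mgf X μ) μ[X] 0 := by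
  have hset : integrableExpSet X μ = univ :=
    eq_univ_of_forall fun _ ↦ integrable_exp_mul_of_mem_Icc hX hab
  simpa using hasDerivAt_mgf (t := 0) (by simp [hset])

lemma hasDerivAt_testFunction {ι : Type*} [Fintype ι] (lam c d : ι → ℝ) {M : ℝ → ℝ}
    {m : ℝ} (hM : HasDerivAt M (-m) 0) (hM₀ : M 0 = 1) :
    HasDerivAt (fun α ↦ -α + ∑ k, lam k * (1 - exp (-α * c k) * M α * exp (-α * d k)))
      (-1 + ∑ k, lam k * (c k + d k) + m * ∑ k, lam k) 0 := by
  have hexp (a : ℝ) : HasDerivAt (fun α ↦ exp (-α * a)) (-a) 0 := by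
    simpa using ((hasDerivAt_id' (0 : ℝ)).fun_neg.mul_const a).exp
  have hterm (k : ι) : HasDerivAt (fun α ↦ exp (-α * c k) * M α * exp (-α * d k))
      (-(c k + d k + m)) 0 :=
    (((hexp (c k)).fun_mul hM).fun_mul (hexp (d k))).congr_deriv (by simp only [hM₀, neg_zero, zero_mul, exp_zero]; ring)
  refine ((hasDerivAt_id' (0 : ℝ)).fun_neg.fun_add (HasDerivAt.fun_sum (u := Finset.univ)
    fun k _ ↦ ((hterm k).const_sub 1).const_mul (lam k))).congr_deriv ?_
  simp only [neg_neg, mul_add, Finset.sum_add_distrib, Finset.sum_mul, mul_comm m]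
  ring

lemma eventually_pos_testFunction {ι : Type*} [Fintype ι] (lam c d : ι → ℝ) {M : ℝ → ℝ}
    {m : ℝ} (hM : HasDerivAt M (-m) 0) (hM₀ : M 0 = 1)
    (h : 1 < ∑ k, lam k * (c k + d k) + m * ∑ k, lam k) :
    ∀ᶠ α in 𝓝[>] 0, 0 < -α + ∑ k, lam k * (1 - exp (-α * c k) * M α * exp (-α * d k)) :=
  eventually_pos_of_hasDerivAt (hasDerivAt_testFunction lam c d hM hM₀) (by simp [hM₀])
    (by linarith)

noncomputable def balancingConst (lam : Fin 2 → ℝ) (θ : Fin 2 → Fin 2 → ℝ) (y : Fin 2) : ℝ :=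
  (lam 0 * (θ y 0 - θ y.rev 0) + lam 1 * (θ y 1 - θ y.rev 1)) / (2 * (lam 0 + lam 1))

lemma sum_mul_add_balancingConst {lam : Fin 2 → ℝ} (hlam : lam 0 + lam 1 ≠ 0)
    (θ : Fin 2 → Fin 2 → ℝ) (y : Fin 2) :
    ∑ k, lam k * (θ y k + (balancingConst lam θ k - balancingConst lam θ y)) =
      (∑ l, ∑ k, lam l * lam k * θ l k) / (lam 0 + lam 1) := by
  fin_cases y <;>
  · simp only [balancingConst, Fin.sum_univ_two, Fin.isValue, Fin.zero_eta, Fin.mk_one,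
      Fin.rev_zero, Fin.reduceRev, Fin.reduceLast, sub_self, add_zero]
    field_simp
    ring

/-- If the FIFO stability condition fails strictly, i.e.
`Σ_{ℓ,k} λ_ℓ λ_k θ_{ℓk}/(λ₁+λ₂) + R̄(λ₁+λ₂) > 1` with `R̄ = E[R]`, then there
exist constants `β₁, β₂` and `α > 0` such that for both `y`,
`−α + Σ_k λ_k (1 − e^{−α θ_{yk}} · E[e^{−αR}] · e^{−α(β_k − β_y)}) > 0`. -/
theorem fifo_instability_test_function
    {Ω : Type*} [MeasurableSpace Ω] (μ : Measure Ω) [IsProbabilityMeasure μ]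
    (R : Ω → ℝ) (hRmeas : Measurable R) (hRnn : ∀ ω, 0 ≤ R ω)
    (C : ℝ) (hRbdd : ∀ ω, R ω ≤ C)
    (lam : Fin 2 → ℝ) (hlam : ∀ k, 0 < lam k)
    (θ : Fin 2 → Fin 2 → ℝ)
    (hunstab : 1 < (∑ l : Fin 2, ∑ k : Fin 2, lam l * lam k * θ l k)
        / (lam 0 + lam 1) + (∫ ω, R ω ∂μ) * (lam 0 + lam 1)) :
    ∃ β : Fin 2 → ℝ, ∃ α : ℝ, 0 < α ∧ ∀ y : Fin 2,
      0 < -α + ∑ k : Fin 2,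
        lam k * (1 - Real.exp (-α * θ y k) * mgf R μ (-α)
            * Real.exp (-α * (β k - β y))) := by
  have hmgf : HasDerivAt (fun α ↦ mgf R μ (-α)) (-μ[R]) 0 := by
    have h := hasDerivAt_mgf_zero_of_mem_Icc hRmeas.aemeasurable
      (ae_of_all μ fun ω ↦ ⟨hRnn ω, hRbdd ω⟩)
    exact ((neg_zero (G := ℝ) ▸ h).comp 0 (hasDerivAt_neg 0)).congr_deriv (mul_neg_one _)
  have hL : lam 0 + lam 1 ≠ 0 := (add_pos (hlam 0) (hlam 1)).ne'
  have hpos (y : Fin 2) := eventually_pos_testFunction lam (θ y)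
    (fun k ↦ balancingConst lam θ k - balancingConst lam θ y) hmgf (by simp)
    (by rwa [sum_mul_add_balancingConst hL, Fin.sum_univ_two lam])
  obtain ⟨α, hαpos, hα⟩ := ((eventually_all.2 hpos).and self_mem_nhdsWithin).exists
  exact ⟨balancingConst lam θ, α, hα, hαpos⟩
end

section
/- Let a ≤ 0, b ≥ 0, and β > 0 be real numbers, and let x₁, x₂ ≥ 0 with x₂ ≤ β x₁ and (x₁, x₂) ≠ (0,0). Then a x₁ + b x₂ ≤ ((a + bβ)/√(1+β²)) · √(x₁² + x₂²). -/
/-!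
With `s = √(1 + β²)` and `r = ‖x‖`, one has
`s · (((a + bβ)/s) r - (a x₁ + b x₂)) = a (r - s x₁) + b (β r - s x₂)`.
Both terms are nonnegative because the cone `|x₂| ≤ β x₁` lies between the
rays through `(1, 0)` and `(1, β)`: there `r ≤ s x₁` and `s x₂ ≤ β r`.
-/

namespace Real

variable {β x₁ x₂ : ℝ}

theorem sq_le_sq_mul_sq_of_abs_le_mul (h : |x₂| ≤ β * x₁) : x₂ ^ 2 ≤ β ^ 2 * x₁ ^ 2 := by
  rw [← mul_pow, ← sq_abs x₂]
  exact pow_le_pow_left₀ (abs_nonneg x₂) h 2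

theorem sqrt_sq_add_sq_le_of_abs_le_mul (hx₁ : 0 ≤ x₁) (h : |x₂| ≤ β * x₁) :
    √(x₁ ^ 2 + x₂ ^ 2) ≤ √(1 + β ^ 2) * x₁ := by
  rw [sqrt_le_iff, mul_pow, sq_sqrt (by positivity)]
  exact ⟨by positivity, by linarith [sq_le_sq_mul_sq_of_abs_le_mul h]⟩

theorem mul_le_mul_sqrt_sq_add_sq_of_abs_le_mul (hβ : 0 ≤ β) (h : |x₂| ≤ β * x₁) :
    √(1 + β ^ 2) * x₂ ≤ β * √(x₁ ^ 2 + x₂ ^ 2) := by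
  have hsq : (1 + β ^ 2) * x₂ ^ 2 ≤ β ^ 2 * (x₁ ^ 2 + x₂ ^ 2) := by
    nlinarith [sq_le_sq_mul_sq_of_abs_le_mul h]
  calc √(1 + β ^ 2) * x₂ ≤ √(1 + β ^ 2) * |x₂| :=
        mul_le_mul_of_nonneg_left (le_abs_self x₂) (sqrt_nonneg _)
    _ = √((1 + β ^ 2) * x₂ ^ 2) := by rw [sqrt_mul (by positivity), sqrt_sq_eq_abs]
    _ ≤ √(β ^ 2 * (x₁ ^ 2 + x₂ ^ 2)) := sqrt_le_sqrt hsq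
    _ = β * √(x₁ ^ 2 + x₂ ^ 2) := by rw [sqrt_mul (by positivity), sqrt_sq hβ]

end Real

theorem lqf_cone_drift_bound_lower_general
    (a b β : ℝ) (ha : a ≤ 0) (hb : 0 ≤ b) (hβ : 0 < β)
    (x1 x2 : ℝ) (hx1 : 0 ≤ x1) (hx2 : 0 ≤ x2)
    (hcone : x2 ≤ β * x1) :
    a * x1 + b * x2 ≤ ((a + b * β) / Real.sqrt (1 + β ^ 2))
      * Real.sqrt (x1 ^ 2 + x2 ^ 2) := by
  set s := √(1 + β ^ 2)
  set r := √(x1 ^ 2 + x2 ^ 2)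
  have hx : |x2| ≤ β * x1 := (abs_of_nonneg hx2).symm ▸ hcone
  have hr : r ≤ s * x1 := Real.sqrt_sq_add_sq_le_of_abs_le_mul hx1 hx
  have hs : s * x2 ≤ β * r := Real.mul_le_mul_sqrt_sq_add_sq_of_abs_le_mul hβ.le hx
  rw [div_mul_eq_mul_div, le_div_iff₀ (by positivity)]
  calc (a * x1 + b * x2) * s = a * (s * x1) + b * (s * x2) := by ring
    _ ≤ a * r + b * (β * r) := add_le_add (mul_le_mul_of_nonpos_left hr ha)
        (mul_le_mul_of_nonneg_left hs hb)
    _ = (a + b * β) * r := by ring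

/-- For `a ≤ 0`, `b ≥ 0`, `β > 0` and `x₁, x₂ ≥ 0` with
`x₂ ≤ β x₁` and `(x₁,x₂) ≠ (0,0)`, one has
`a x₁ + b x₂ ≤ ((a + bβ)/√(1+β²)) · √(x₁² + x₂²)`. -/
theorem lqf_cone_drift_bound_lower
    (a b β : ℝ) (ha : a ≤ 0) (hb : 0 ≤ b) (hβ : 0 < β)
    (x1 x2 : ℝ) (hx1 : 0 ≤ x1) (hx2 : 0 ≤ x2)
    (hcone : x2 ≤ β * x1) (hne : (x1, x2) ≠ (0, 0)) :
    a * x1 + b * x2 ≤ ((a + b * β) / Real.sqrt (1 + β ^ 2))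
      * Real.sqrt (x1 ^ 2 + x2 ^ 2) :=
  lqf_cone_drift_bound_lower_general a b β ha hb hβ x1 x2 hx1 hx2 hcone
end
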